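/- The marginal density of the first d₁ coordinates of an Angular Gaussian AG_d(μ, Σ) random vector is itself Angular Gaussian: if x has density proportional to det(Σ)^{-1/2} [(x-μ)ᵀΣ⁻¹(x-μ)]^{-d/2} on ℝ^d, then x₁ has density proportional to det(Σ₁₁)^{-1/2} [(x₁-μ₁)ᵀΣ₁₁⁻¹(x₁-μ₁)]^{-d₁/2} on ℝ^{d₁}, obtained by integrating out x₂ using the quadratic-form decomposition and the normalization of the multivariate t-density. -/

import Mathlib

/-!
Write `v = x - μ = (v₁, v₂)`. Completing the square in `v₂` gives
`vᵀ Σ⁻¹ v = q₁ + wᵀ S⁻¹ w` with `w = v₂ - Σ₂₁ Σ₁₁⁻¹ v₁` and `S = Σ₂₂ - Σ₂₁ Σ₁₁⁻¹ Σ₁₂` the Schur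
complement, which is positive definite with `det Σ = det Σ₁₁ · det S`. After translating `x₂`,
the substitution `w = √q₁ · R⁻¹ z`, where `Rᵀ R = S⁻¹`, turns the integral into
`det S ^ (1/2) · q₁ ^ (d₂/2 - d/2) · ∫ (1 + ‖z‖²) ^ (-d/2) dz`; the last integral is finite and
positive because `d₂ < d`, i.e. `d₁ ≥ 1`.
-/

open Matrix MeasureTheory Module

section Integrals

variable {ι : Type*} [Fintype ι]

lemma dotProduct_self_nonneg (x : ι → ℝ) : 0 ≤ x ⬝ᵥ x :=
  Finset.sum_nonneg fun i _ => mul_self_nonneg (x i)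

lemma integrable_one_add_dotProduct_self_rpow {r : ℝ} (hr : (Fintype.card ι : ℝ) < r) :
    Integrable fun x : ι → ℝ => (1 + x ⬝ᵥ x) ^ (-r / 2) := by
  rw [← (PiLp.volume_preserving_ofLp ι).integrable_comp_emb
    (MeasurableEquiv.toLp 2 (ι → ℝ)).symm.measurableEmbedding]
  convert integrable_rpow_neg_one_add_norm_sq (E := EuclideanSpace ℝ ι) (μ := volume)
    (by simpa using hr) using 3 with v
  · rfl
  · rw [EuclideanSpace.real_norm_sq_eq]
    simp [dotProduct, sq]

lemma integral_one_add_dotProduct_self_rpow_pos {r : ℝ} (hr : (Fintype.card ι : ℝ) < r) :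
    0 < ∫ x : ι → ℝ, (1 + x ⬝ᵥ x) ^ (-r / 2) := by
  have hpos (x : ι → ℝ) : 0 < (1 + x ⬝ᵥ x) ^ (-r / 2) := by
    have := dotProduct_self_nonneg x
    positivity
  rw [integral_pos_iff_support_of_nonneg (fun x => (hpos x).le)
    (integrable_one_add_dotProduct_self_rpow hr)]
  simpa [Function.support, (hpos _).ne'] using NeZero.ne volume

lemma integral_rpow_add_dotProduct_self {q : ℝ} (hq : 0 < q) (p : ℝ) :
    ∫ x : ι → ℝ, (q + x ⬝ᵥ x) ^ p =
      q ^ ((Fintype.card ι : ℝ) / 2 + p) * ∫ x : ι → ℝ, (1 + x ⬝ᵥ x) ^ p := by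
  have hscale := Measure.integral_comp_smul (μ := volume)
    (fun x : ι → ℝ => (q + x ⬝ᵥ x) ^ p) (√q)
  have hunscale (x : ι → ℝ) : (q + √q • x ⬝ᵥ √q • x) ^ p = q ^ p * (1 + x ⬝ᵥ x) ^ p := by
    have := dotProduct_self_nonneg x
    rw [smul_dotProduct, dotProduct_smul, smul_smul, smul_eq_mul, Real.mul_self_sqrt hq.le,
      ← Real.mul_rpow hq.le (by positivity), mul_add, mul_one]
  have hroot : √q ^ Fintype.card ι = q ^ ((Fintype.card ι : ℝ) / 2) := by
    rw [Real.sqrt_eq_rpow, ← Real.rpow_natCast, ← Real.rpow_mul hq.le, one_div_mul_eq_div]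
  simp_rw [hunscale, integral_const_mul, finrank_fintype_fun_eq_card, hroot, abs_inv,
    abs_of_pos (Real.rpow_pos_of_pos hq _), smul_eq_mul] at hscale
  rw [Real.rpow_add hq, mul_assoc, hscale, mul_inv_cancel_left₀ (Real.rpow_pos_of_pos hq _).ne']

variable [DecidableEq ι] {E : Type*} [NormedAddCommGroup E] [NormedSpace ℝ E]

lemma integral_comp_mulVec {M : Matrix ι ι ℝ} (hM : M.det ≠ 0) (f : (ι → ℝ) → E) :
    ∫ x, f (M *ᵥ x) = |M.det|⁻¹ • ∫ x, f x := by
  have hemb : MeasurableEmbedding (toLin' M) :=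
    (M.toLinearEquiv' (M.invertibleOfIsUnitDet hM.isUnit)).toContinuousLinearEquiv
      |>.toHomeomorph.measurableEmbedding
  change ∫ x, f (toLin' M x) = _
  rw [← hemb.integral_map, Real.map_matrix_volume_pi_eq_smul_volume_pi hM, integral_smul_measure,
    ENNReal.toReal_ofReal (abs_nonneg _), abs_inv]

open scoped MatrixOrder in
lemma integral_comp_dotProduct_mulVec {P : Matrix ι ι ℝ} (hP : P.PosDef) (f : ℝ → E) :
    ∫ x : ι → ℝ, f (x ⬝ᵥ P *ᵥ x) = P.det ^ (-(1 : ℝ) / 2) • ∫ x : ι → ℝ, f (x ⬝ᵥ x) := by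
  obtain ⟨R, rfl⟩ := CStarAlgebra.nonneg_iff_eq_star_mul_self.mp hP.posSemidef.nonneg
  have hdet : (star R * R).det = R.det ^ 2 := by
    rw [det_mul, star_eq_conjTranspose, det_conjTranspose, star_trivial, sq]
  have hR : R.det ≠ 0 := by
    have := hP.det_pos
    rw [hdet] at this
    exact pow_ne_zero_iff two_ne_zero |>.mp this.ne'
  have hquad (x : ι → ℝ) : x ⬝ᵥ (star R * R) *ᵥ x = R *ᵥ x ⬝ᵥ R *ᵥ x := by
    rw [← mulVec_mulVec, star_eq_conjTranspose, conjTranspose_eq_transpose_of_trivial,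
      dotProduct_mulVec, vecMul_transpose]
  simp_rw [hquad]
  rw [integral_comp_mulVec hR (fun y => f (y ⬝ᵥ y)), hdet, ← sq_abs, ← Real.rpow_natCast,
    ← Real.rpow_mul (abs_nonneg _)]
  norm_num [Real.rpow_neg_one]

lemma integral_rpow_add_dotProduct_mulVec {P : Matrix ι ι ℝ} (hP : P.PosDef) {q : ℝ} (hq : 0 < q)
    (p : ℝ) :
    ∫ x : ι → ℝ, (q + x ⬝ᵥ P *ᵥ x) ^ p =
      P.det ^ (-(1 : ℝ) / 2) * q ^ ((Fintype.card ι : ℝ) / 2 + p) *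
        ∫ x : ι → ℝ, (1 + x ⬝ᵥ x) ^ p := by
  rw [integral_comp_dotProduct_mulVec hP (fun t => (q + t) ^ p), smul_eq_mul,
    integral_rpow_add_dotProduct_self hq, mul_assoc]

end Integrals

open scoped ComplexOrder in
lemma Matrix.PosDef.of_fromBlocks₁₁ {m n 𝕜 : Type*} [RCLike 𝕜] {A : Matrix m m 𝕜}
    {B : Matrix m n 𝕜} {C : Matrix n m 𝕜} {D : Matrix n n 𝕜} (h : (fromBlocks A B C D).PosDef) :
    A.PosDef := by
  convert h.submatrix Sum.inl_injective
  ext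
  simp

section BlockMatrix

variable {m n : Type*} [Fintype m] [Fintype n] [DecidableEq m] [DecidableEq n]

open scoped ComplexOrder in
lemma Matrix.PosDef.schur_complement_fromBlocks₁₁ {𝕜 : Type*} [RCLike 𝕜] {A : Matrix m m 𝕜}
    {B : Matrix m n 𝕜} {D : Matrix n n 𝕜} (h : (fromBlocks A B Bᴴ D).PosDef) :
    (D - Bᴴ * A⁻¹ * B).PosDef := by
  have hA := h.of_fromBlocks₁₁
  have := hA.isUnit.invertible
  refine ((PosDef.fromBlocks₁₁ B D hA).mp h.posSemidef).posDef_iff_det_ne_zero.mpr fun h0 => ?_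
  have := h.det_pos.ne'
  rw [det_fromBlocks₁₁, invOf_eq_nonsing_inv, h0, mul_zero] at this
  exact this rfl

lemma sumElim_dotProduct_fromBlocks_inv_mulVec {A : Matrix m m ℝ} {B : Matrix m n ℝ}
    {D : Matrix n n ℝ} (hA : A.IsSymm) (hAdet : IsUnit A.det)
    (hSdet : IsUnit (D - Bᵀ * A⁻¹ * B).det) (x : m → ℝ) (y : n → ℝ) :
    Sum.elim x y ⬝ᵥ (fromBlocks A B Bᵀ D)⁻¹ *ᵥ Sum.elim x y =
      x ⬝ᵥ A⁻¹ *ᵥ x +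
        (y - (Bᵀ * A⁻¹) *ᵥ x) ⬝ᵥ (D - Bᵀ * A⁻¹ * B)⁻¹ *ᵥ (y - (Bᵀ * A⁻¹) *ᵥ x) := by
  set S := D - Bᵀ * A⁻¹ * B
  have := invertibleOfIsUnitDet A hAdet
  have hdet : IsUnit (fromBlocks A B Bᵀ D).det := by
    rw [det_fromBlocks₁₁, invOf_eq_nonsing_inv]
    exact hAdet.mul hSdet
  -- both sides equal `x ⬝ᵥ u₁ + y ⬝ᵥ u₂`, where `(u₁, u₂)` is the preimage of `(x, y)`
  obtain ⟨u₁, u₂, hu⟩ : ∃ u₁ u₂, (fromBlocks A B Bᵀ D)⁻¹ *ᵥ Sum.elim x y = Sum.elim u₁ u₂ :=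
    ⟨_, _, (Sum.elim_comp_inl_inr _).symm⟩
  have hxy : fromBlocks A B Bᵀ D *ᵥ Sum.elim u₁ u₂ = Sum.elim x y := by
    rw [← hu, mulVec_mulVec, mul_nonsing_inv _ hdet, one_mulVec]
  rw [fromBlocks_mulVec] at hxy
  obtain ⟨hx, hy⟩ : A *ᵥ u₁ + B *ᵥ u₂ = x ∧ Bᵀ *ᵥ u₁ + D *ᵥ u₂ = y :=
    ⟨congrArg (· ∘ Sum.inl) hxy, congrArg (· ∘ Sum.inr) hxy⟩
  have h₁ : A⁻¹ *ᵥ x = u₁ + (A⁻¹ * B) *ᵥ u₂ := by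
    rw [← hx, mulVec_add, mulVec_mulVec, mulVec_mulVec, nonsing_inv_mul _ hAdet, one_mulVec]
  have h₂ : y - (Bᵀ * A⁻¹) *ᵥ x = S *ᵥ u₂ := by
    rw [← mulVec_mulVec, h₁, ← hy]
    simp only [S, sub_mulVec, mulVec_add, mulVec_mulVec, Matrix.mul_assoc]
    abel
  have hsymm : x ⬝ᵥ (A⁻¹ * B) *ᵥ u₂ = (Bᵀ * A⁻¹) *ᵥ x ⬝ᵥ u₂ := by
    rw [dotProduct_mulVec, ← mulVec_transpose, transpose_mul, transpose_nonsing_inv, hA]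
  rw [hu, h₂, mulVec_mulVec, nonsing_inv_mul _ hSdet, one_mulVec, ← h₂, h₁,
    sumElim_dotProduct_sumElim, dotProduct_add, sub_dotProduct, hsymm]
  ring

end BlockMatrix

/-- The marginal of an Angular Gaussian is Angular Gaussian:
integrating the (unnormalized) AG density over x₂ yields, up to a constant
c > 0 depending only on d₁ and d₂, the unnormalized AG density of x₁. -/
theorem angular_gaussian_marginal
    (d₁ d₂ : ℕ) (hd₁ : 1 ≤ d₁) :
    ∃ c : ℝ, 0 < c ∧
      ∀ (A : Matrix (Fin d₁) (Fin d₁) ℝ) (B : Matrix (Fin d₁) (Fin d₂) ℝ)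
        (D : Matrix (Fin d₂) (Fin d₂) ℝ),
        (Matrix.fromBlocks A B Bᵀ D).PosDef →
        ∀ (μ₁ x₁ : Fin d₁ → ℝ) (μ₂ : Fin d₂ → ℝ), x₁ ≠ μ₁ →
          (∫ x₂ : Fin d₂ → ℝ,
              (Matrix.fromBlocks A B Bᵀ D).det ^ (-(1:ℝ)/2) *
                ((Sum.elim x₁ x₂ - Sum.elim μ₁ μ₂) ⬝ᵥ
                  ((Matrix.fromBlocks A B Bᵀ D)⁻¹ *ᵥ
                    (Sum.elim x₁ x₂ - Sum.elim μ₁ μ₂))) ^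
                  (-((d₁ : ℝ) + d₂) / 2)) =
            c * A.det ^ (-(1:ℝ)/2) *
              ((x₁ - μ₁) ⬝ᵥ (A⁻¹ *ᵥ (x₁ - μ₁))) ^ (-(d₁ : ℝ) / 2) := by
  refine ⟨_, integral_one_add_dotProduct_self_rpow_pos (ι := Fin d₂) (r := d₁ + d₂)
    (by simpa using Nat.succ_le_iff.mp hd₁), ?_⟩
  intro A B D hpd μ₁ x₁ μ₂ hx
  have hA := hpd.of_fromBlocks₁₁
  have hS : (D - Bᵀ * A⁻¹ * B).PosDef := by
    simpa using hpd.schur_complement_fromBlocks₁₁ (B := B)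
  have hq : 0 < (x₁ - μ₁) ⬝ᵥ A⁻¹ *ᵥ (x₁ - μ₁) := by
    simpa using hA.inv.dotProduct_mulVec_pos (sub_ne_zero.mpr hx)
  have hsymm : A.IsSymm := by simpa using hA.isHermitian
  simp_rw [← Sum.elim_sub_sub, sumElim_dotProduct_fromBlocks_inv_mulVec hsymm
    hA.det_pos.ne'.isUnit hS.det_pos.ne'.isUnit, sub_sub]
  rw [integral_const_mul, integral_sub_right_eq_self (fun x₂ => (_ + x₂ ⬝ᵥ _ *ᵥ x₂) ^ _),
    integral_rpow_add_dotProduct_mulVec hS.inv hq]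
  have := hA.isUnit.invertible
  have hexp : (Fintype.card (Fin d₂) : ℝ) / 2 + -((d₁ : ℝ) + d₂) / 2 = -(d₁ : ℝ) / 2 := by
    simp only [Fintype.card_fin]
    ring
  have hSdet := (Real.rpow_pos_of_pos hS.det_pos (-(1 : ℝ) / 2)).ne'
  rw [hexp, det_nonsing_inv, Ring.inverse_eq_inv', det_fromBlocks₁₁, invOf_eq_nonsing_inv,
    Real.mul_rpow hA.det_pos.le hS.det_pos.le, Real.inv_rpow hS.det_pos.le]
  generalize (D - Bᵀ * A⁻¹ * B).det ^ (-(1 : ℝ) / 2) = s at hSdet ⊢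
  field_simp
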